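/- arXiv:1810.00455 — 4 statements merged into one kernel-verified Lean document; each statement's English description precedes it below -/
import Mathlib

section
/- Let P be a set of n points partitioned into groups of size at most r+1, with at least ⌈n/(r+1)⌉ groups, and let Q be the multiset of upper-hull edge slopes of the groups. Suppose at most |Q|/(r+1) slopes of Q lie in the open interval (σ_{k−1}, σ_k). If P_k collects, from each group G_j, only those upper-hull vertices v of G_j whose consecutive hull edges on both sides (when they exist within the selected range) have slopes in (σ_{k−1}, σ_k), with at most one extra vertex per group, then |P_k| ≤ |Q|/(r+1) + n/(r+1) ≤ 2n/(r+1). -/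
open Finset

theorem Finset.sum_le_sum_add_card {ι R : Type*} [AddCommMonoidWithOne R] [PartialOrder R]
    [IsOrderedAddMonoid R] (s : Finset ι) {f g : ι → R} (h : ∀ i ∈ s, f i ≤ g i + 1) :
    ∑ i ∈ s, f i ≤ ∑ i ∈ s, g i + #s :=
  calc ∑ i ∈ s, f i ≤ ∑ i ∈ s, (g i + 1) := sum_le_sum h
    _ = ∑ i ∈ s, g i + #s := by rw [sum_add_distrib, sum_const, nsmul_one]

theorem mul_div_add_one_le_self {K : Type*} [Field K] [LinearOrder K] [IsStrictOrderedRing K]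
    {a b : K} (ha : 0 ≤ a) (hb : 0 ≤ b) : a * b / (a + 1) ≤ b := by
  rw [div_le_iff₀ (by positivity)]
  nlinarith

theorem stmt9_general (n r : ℕ) (m : ℕ) (Qcard : ℕ)
    (hm : (m : ℝ) = n / (r + 1))
    (hQ : (Qcard : ℝ) ≤ r * n / (r + 1))
    (edges contrib : Fin m → ℕ)
    (hedges : (∑ j, (edges j : ℝ)) ≤ Qcard / (r + 1))
    (hcontrib : ∀ j, contrib j ≤ edges j + 1)
    (Pk : ℕ) (hPk : (Pk : ℝ) ≤ ∑ j, (contrib j : ℝ)) :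
    (Pk : ℝ) ≤ Qcard / (r + 1) + n / (r + 1) ∧
    Qcard / (r + 1) + (n : ℝ) / (r + 1) ≤ 2 * n / (r + 1) := by
  constructor
  · have hsum : ∑ j, (contrib j : ℝ) ≤ ∑ j, (edges j : ℝ) + m := by
      simpa using sum_le_sum_add_card (f := fun j => (contrib j : ℝ)) (g := fun j => (edges j : ℝ))
        univ fun j _ => by exact_mod_cast hcontrib j
    linarith
  · have hQn : (Qcard : ℝ) ≤ n := hQ.trans (mul_div_add_one_le_self r.cast_nonneg n.cast_nonneg)
    rw [two_mul, add_div]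
    gcongr

/-- Balanced splitting (Lemma 3): with `m = n/(r+1)` groups, `|Q| ≤ r·n/(r+1)`, each group
contributing at most one vertex more than its number of selected edges, and at most
`|Q|/(r+1)` edge slopes lying in the open interval, the part `P_k` has size at most
`|Q|/(r+1) + n/(r+1) ≤ 2n/(r+1)`. -/
theorem stmt9 (n r : ℕ) (hr : 1 ≤ r) (m : ℕ) (Qcard : ℕ)
    (hm : (m : ℝ) = n / (r + 1))
    (hQ : (Qcard : ℝ) ≤ r * n / (r + 1))
    (edges contrib : Fin m → ℕ)
    (hedges : (∑ j, (edges j : ℝ)) ≤ Qcard / (r + 1))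
    (hcontrib : ∀ j, contrib j ≤ edges j + 1)
    (Pk : ℕ) (hPk : (Pk : ℝ) ≤ ∑ j, (contrib j : ℝ)) :
    (Pk : ℝ) ≤ Qcard / (r + 1) + n / (r + 1) ∧
    Qcard / (r + 1) + (n : ℝ) / (r + 1) ≤ 2 * n / (r + 1) :=
  stmt9_general n r m Qcard hm hQ edges contrib hedges hcontrib Pk hPk
end

section
/- If a point p ∈ P lies on or below the line through two points a, b ∈ P with x(a) < x(p) < x(b), then p is not a vertex of the upper hull of P. -/
/-- `s` supports slp `σ` in `S`: it maximizes `y(p) - σ·x(p)` over `p ∈ S`. -/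
def Supports (S : Set (ℝ × ℝ)) (σ : ℝ) (s : ℝ × ℝ) : Prop :=
  s ∈ S ∧ ∀ p ∈ S, p.2 - σ * p.1 ≤ s.2 - σ * s.1

/-- Slp: slope of the line through `p` and `q`. -/
noncomputable def slp (p q : ℝ × ℝ) : ℝ := (q.2 - p.2) / (q.1 - p.1)

/-- `q` is a vertex of the upper hull of `S`: some slp `τ` is strictly supported at `q`. -/
def IsUHVertex (S : Set (ℝ × ℝ)) (q : ℝ × ℝ) : Prop :=
  q ∈ S ∧ ∃ τ : ℝ, ∀ p ∈ S, p ≠ q → p.2 - τ * p.1 < q.2 - τ * q.1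

/-- A point lying on or below a line through two points of `P` spanning it in
`x`-coordinate is not an upper-hull vertex. -/
theorem stmt13 (P : Set (ℝ × ℝ)) (hfin : P.Finite)
    (hdist : ∀ p ∈ P, ∀ q ∈ P, p ≠ q → p.1 ≠ q.1)
    (a b p : ℝ × ℝ) (ha : a ∈ P) (hb : b ∈ P) (hp : p ∈ P)
    (hax : a.1 < p.1) (hpb : p.1 < b.1)
    (hbelow : p.2 ≤ a.2 + slp a b * (p.1 - a.1)) :
    ¬ IsUHVertex P p := by
  rintro ⟨-, τ, h⟩
  have hap : a ≠ p := fun e => absurd (congrArg Prod.fst e) (ne_of_lt hax)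
  have hbp : b ≠ p := fun e => absurd (congrArg Prod.fst e) (ne_of_gt hpb)
  have h1 := h a ha hap
  have h2 := h b hb hbp
  have hab : (0:ℝ) < b.1 - a.1 := by linarith
  have hs : slp a b * (b.1 - a.1) = b.2 - a.2 := by
    rw [slp]; field_simp
  nlinarith [mul_lt_mul_of_pos_right h1 (show (0:ℝ) < b.1 - p.1 by linarith),
    mul_lt_mul_of_pos_right h2 (show (0:ℝ) < p.1 - a.1 by linarith),
    mul_le_mul_of_nonneg_right hbelow (le_of_lt hab)]
end

section
/- Let p_L, p_R ∈ ℝ² with x(p_L) < x(p_R), and let p₁, …, p_s be points strictly above segment p_L p_R, with x(p_L) < x(p₁) < ⋯ < x(p_s) < x(p_R), forming a strictly concave chain together with p_L and p_R (consecutive slopes strictly decreasing along p_L, p₁, …, p_s, p_R). Then for each i ∈ [1, s], there exist points q_i^L and q_i^R such that the upper hull of {p_L, p₁, …, p_s, p_R, q_i^L, q_i^R} has exactly the vertex set {p_L, q_i^L, p_i, q_i^R, p_R}. -/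
lemma vertex_of_support (S : Set (ℝ × ℝ)) (v : ℝ × ℝ) (hv : v ∈ S) (τ : ℝ)
    (h : ∀ p ∈ S, p ≠ v → p.2 < v.2 + τ * (p.1 - v.1)) : IsUHVertex S v :=
  ⟨hv, τ, fun p hp hne => by have := h p hp hne; linarith [this]⟩

lemma not_vertex_between (S : Set (ℝ × ℝ)) (q a b : ℝ × ℝ) (ha : a ∈ S) (hb : b ∈ S)
    (haq : a ≠ q) (hbq : b ≠ q) (h1 : a.1 ≤ q.1) (h2 : q.1 ≤ b.1) (h3 : a.1 < b.1)
    (h4 : (b.1 - a.1) * q.2 ≤ (b.1 - q.1) * a.2 + (q.1 - a.1) * b.2) :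
    ¬ IsUHVertex S q := by
  rintro ⟨-, τ, h⟩
  have hA := h a ha haq
  have hB := h b hb hbq
  rcases lt_or_eq_of_le h2 with h2' | h2'
  · have e1 : (b.1 - q.1) * (a.2 - τ * a.1) < (b.1 - q.1) * (q.2 - τ * q.1) :=
      mul_lt_mul_of_pos_left hA (by linarith)
    have e2 : (q.1 - a.1) * (b.2 - τ * b.1) ≤ (q.1 - a.1) * (q.2 - τ * q.1) :=
      mul_le_mul_of_nonneg_left hB.le (by linarith)
    linarith [e1, e2, h4]
  · have hb2 : b.2 < q.2 := by rw [h2'] at hB; linarith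
    have hq2 : q.2 ≤ b.2 := by
      rw [h2'] at h4
      nlinarith [h4, h3]
    linarith

lemma not_vertex_under (S : Set (ℝ × ℝ)) (q a : ℝ × ℝ) (ha : a ∈ S)
    (haq : a ≠ q) (h1 : a.1 = q.1) (h2 : q.2 ≤ a.2) : ¬ IsUHVertex S q := by
  rintro ⟨-, τ, h⟩
  have hA := h a ha haq
  rw [h1] at hA
  linarith

lemma chain_support (N k : ℕ) (c : ℕ → ℝ × ℝ) (σ : ℝ)
    (hL : ∀ j, j < k → σ * ((c (j+1)).1 - (c j).1) < (c (j+1)).2 - (c j).2)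
    (hR : ∀ j, k ≤ j → j < N → (c (j+1)).2 - (c j).2 < σ * ((c (j+1)).1 - (c j).1)) :
    ∀ j, j ≤ N → j ≠ k → (c j).2 < (c k).2 + σ * ((c j).1 - (c k).1) := by
  have left : ∀ d, 1 ≤ d → d ≤ k →
      (c (k - d)).2 < (c k).2 + σ * ((c (k - d)).1 - (c k).1) := by
    intro d hd
    induction d, hd using Nat.le_induction with
    | base =>
      intro hdk
      have h := hL (k-1) (by omega)
      have e : k - 1 + 1 = k := by omega
      rw [e] at h
      linarith
    | succ d hd ih =>
      intro hdk
      have ih' := ih (by omega)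
      have h := hL (k - (d+1)) (by omega)
      have e : k - (d+1) + 1 = k - d := by omega
      rw [e] at h
      linarith
  have right : ∀ j, k + 1 ≤ j → j ≤ N →
      (c j).2 < (c k).2 + σ * ((c j).1 - (c k).1) := by
    intro j hj
    induction j, hj using Nat.le_induction with
    | base =>
      intro hN
      have h := hR k le_rfl (by omega)
      linarith
    | succ j hj ih =>
      intro hN
      have ih' := ih (by omega)
      have h := hR j (by omega) (by omega)
      linarith
  intro j hj hjk
  rcases lt_or_gt_of_ne hjk with h | h
  · have e : k - (k - j) = j := by omega
    have := left (k - j) (by omega) (by omega)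
    rw [e] at this
    exact this
  · exact right j (by omega) hj

set_option maxHeartbeats 1000000 in
/-- Adversary construction: above any strictly concave chain `p_L, p₁, …, p_s, p_R` one
can add, for each `i`, two points `qᵢᴸ, qᵢᴿ` so that the upper hull of the enlarged set
has vertex set exactly `{p_L, qᵢᴸ, pᵢ, qᵢᴿ, p_R}`. -/
theorem stmt17 (s : ℕ) (hs : 1 ≤ s) (pL pR : ℝ × ℝ) (p : ℕ → ℝ × ℝ)
    (c : ℕ → ℝ × ℝ) (hc0 : c 0 = pL) (hcs : c (s + 1) = pR)
    (hci : ∀ i, 1 ≤ i → i ≤ s → c i = p i)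
    (hxinc : ∀ i, i ≤ s → (c i).1 < (c (i + 1)).1)
    (hconc : ∀ i, 1 ≤ i → i ≤ s → slp (c i) (c (i + 1)) < slp (c (i - 1)) (c i))
    (habove : ∀ i, 1 ≤ i → i ≤ s →
      pL.2 + slp pL pR * ((p i).1 - pL.1) < (p i).2) :
    ∀ i, 1 ≤ i → i ≤ s → ∃ qL qR : ℝ × ℝ,
      ∀ q, IsUHVertex ({pL, pR, qL, qR} ∪ (p '' {j | 1 ≤ j ∧ j ≤ s})) q ↔
        q ∈ ({pL, qL, p i, qR, pR} : Set (ℝ × ℝ)) := by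
  subst hc0
  subst hcs
  intro i hi1 hi2
  rw [← hci i hi1 hi2]
  clear habove hs
  -- basic x facts
  have hdx : ∀ j, j ≤ s → (0:ℝ) < (c (j+1)).1 - (c j).1 := fun j hj => sub_pos.mpr (hxinc j hj)
  have hxlt : ∀ j k : ℕ, j < k → k ≤ s + 1 → (c j).1 < (c k).1 := by
    intro j k hjk hk
    induction k with
    | zero => omega
    | succ n ih =>
      rcases Nat.lt_succ_iff_lt_or_eq.mp hjk with h | h
      · exact lt_trans (ih h (by omega)) (hxinc n (by omega))
      · subst h; exact hxinc j (by omega)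
  -- slopes
  obtain ⟨M, hMdef⟩ : ∃ M : ℕ → ℝ, M = fun j => slp (c j) (c (j+1)) := ⟨_, rfl⟩
  have hMe : ∀ j, j ≤ s → (c (j+1)).2 - (c j).2 = M j * ((c (j+1)).1 - (c j).1) := by
    intro j hj
    have h := hdx j hj
    simp only [hMdef, slp]
    field_simp
  have hMstep : ∀ t, 1 ≤ t → t ≤ s → M t < M (t-1) := by
    intro t h1 h2
    have h := hconc t h1 h2
    have e : t - 1 + 1 = t := by omega
    simp only [hMdef]
    rw [e]
    exact h
  have hMmono : ∀ j k, j ≤ k → k ≤ s → M k ≤ M j := by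
    intro j k hjk hks
    induction k with
    | zero => have : j = 0 := by omega
              rw [this]
    | succ n ih =>
      by_cases hj : j = n + 1
      · rw [hj]
      · have h1 : M (n+1) < M n := by
          have h := hMstep (n+1) (by omega) hks
          simpa using h
        exact le_trans h1.le (ih (by omega) (by omega))
  have hMi : M i < M (i-1) := hMstep i hi1 hi2
  obtain ⟨σ0, hs0⟩ : ∃ x : ℝ, x = M 0 + 1 := ⟨_, rfl⟩
  obtain ⟨σ1, hs1⟩ : ∃ x : ℝ, x = (2 * M (i-1) + M i) / 3 := ⟨_, rfl⟩
  obtain ⟨σ2, hs2⟩ : ∃ x : ℝ, x = (M (i-1) + 2 * M i) / 3 := ⟨_, rfl⟩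
  obtain ⟨σ3, hs3⟩ : ∃ x : ℝ, x = M s - 1 := ⟨_, rfl⟩
  have h21 : σ2 < σ1 := by rw [hs1, hs2]; linarith
  have h1i : σ1 < M (i-1) := by rw [hs1]; linarith
  have h2i : M i < σ2 := by rw [hs2]; linarith
  have hM0 : M (i-1) ≤ M 0 := hMmono 0 (i-1) (by omega) (by omega)
  have hMs : M s ≤ M i := hMmono i s hi2 le_rfl
  have h01 : σ1 < σ0 := by rw [hs0]; linarith
  have h23 : σ3 < σ2 := by rw [hs3]; linarith
  have h0i : M 0 < σ0 := by rw [hs0]; linarith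
  have h3i : σ3 < M s := by rw [hs3]; linarith
  -- support lines
  have sup0 : ∀ j, j ≤ s+1 → j ≠ 0 → (c j).2 < (c 0).2 + σ0 * ((c j).1 - (c 0).1) := by
    refine chain_support (s+1) 0 c σ0 ?_ ?_
    · intro j hj; omega
    · intro j _ hj
      have hj' : j ≤ s := by omega
      rw [hMe j hj']
      have hMj : M j ≤ M 0 := hMmono 0 j (by omega) hj'
      have := mul_lt_mul_of_pos_right (show M j < σ0 by linarith) (hdx j hj')
      linarith
  have sup1 : ∀ j, j ≤ s+1 → j ≠ i → (c j).2 < (c i).2 + σ1 * ((c j).1 - (c i).1) := by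
    refine chain_support (s+1) i c σ1 ?_ ?_
    · intro j hj
      have hj' : j ≤ s := by omega
      rw [hMe j hj']
      have hMj : M (i-1) ≤ M j := hMmono j (i-1) (by omega) (by omega)
      have := mul_lt_mul_of_pos_right (show σ1 < M j by linarith) (hdx j hj')
      linarith
    · intro j hij hj
      have hj' : j ≤ s := by omega
      rw [hMe j hj']
      have hMj : M j ≤ M i := hMmono i j hij hj'
      have := mul_lt_mul_of_pos_right (show M j < σ1 by linarith) (hdx j hj')
      linarith
  have sup2 : ∀ j, j ≤ s+1 → j ≠ i → (c j).2 < (c i).2 + σ2 * ((c j).1 - (c i).1) := by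
    refine chain_support (s+1) i c σ2 ?_ ?_
    · intro j hj
      have hj' : j ≤ s := by omega
      rw [hMe j hj']
      have hMj : M (i-1) ≤ M j := hMmono j (i-1) (by omega) (by omega)
      have := mul_lt_mul_of_pos_right (show σ2 < M j by linarith) (hdx j hj')
      linarith
    · intro j hij hj
      have hj' : j ≤ s := by omega
      rw [hMe j hj']
      have hMj : M j ≤ M i := hMmono i j hij hj'
      have := mul_lt_mul_of_pos_right (show M j < σ2 by linarith) (hdx j hj')
      linarith
  have sup3 : ∀ j, j ≤ s+1 → j ≠ s+1 →
      (c j).2 < (c (s+1)).2 + σ3 * ((c j).1 - (c (s+1)).1) := by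
    refine chain_support (s+1) (s+1) c σ3 ?_ ?_
    · intro j hj
      have hj' : j ≤ s := by omega
      rw [hMe j hj']
      have hMj : M s ≤ M j := hMmono j s (by omega) (by omega)
      have := mul_lt_mul_of_pos_right (show σ3 < M j by linarith) (hdx j hj')
      linarith
    · intro j h1 h2; omega
  -- the two added points
  have h01' : (0:ℝ) < σ0 - σ1 := by linarith
  have h23' : (0:ℝ) < σ2 - σ3 := by linarith
  obtain ⟨qL, hqLdef⟩ : ∃ x : ℝ × ℝ, x = (((c i).2 - (c 0).2 + σ0 * (c 0).1 - σ1 * (c i).1) / (σ0 - σ1),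
    (c 0).2 + σ0 * ((((c i).2 - (c 0).2 + σ0 * (c 0).1 - σ1 * (c i).1) / (σ0 - σ1)) - (c 0).1)) := ⟨_, rfl⟩
  obtain ⟨qR, hqRdef⟩ : ∃ x : ℝ × ℝ, x = (((c (s+1)).2 - (c i).2 + σ2 * (c i).1 - σ3 * (c (s+1)).1) / (σ2 - σ3),
    (c i).2 + σ2 * ((((c (s+1)).2 - (c i).2 + σ2 * (c i).1 - σ3 * (c (s+1)).1) / (σ2 - σ3)) - (c i).1)) := ⟨_, rfl⟩
  have hqL0 : qL.2 = (c 0).2 + σ0 * (qL.1 - (c 0).1) := by rw [hqLdef]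
  have hqL1 : qL.2 = (c i).2 + σ1 * (qL.1 - (c i).1) := by
    rw [hqLdef]
    have hne : σ0 - σ1 ≠ 0 := ne_of_gt h01'
    field_simp
    ring
  have hqR2 : qR.2 = (c i).2 + σ2 * (qR.1 - (c i).1) := by rw [hqRdef]
  have hqR3 : qR.2 = (c (s+1)).2 + σ3 * (qR.1 - (c (s+1)).1) := by
    rw [hqRdef]
    have hne : σ2 - σ3 ≠ 0 := ne_of_gt h23'
    field_simp
    ring
  have heqL : (c 0).2 + σ0 * (qL.1 - (c 0).1) = (c i).2 + σ1 * (qL.1 - (c i).1) :=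
    hqL0.symm.trans hqL1
  have heqR : (c i).2 + σ2 * (qR.1 - (c i).1) = (c (s+1)).2 + σ3 * (qR.1 - (c (s+1)).1) :=
    hqR2.symm.trans hqR3
  -- x bounds of qL, qR
  have hxaL : (c 0).1 < qL.1 := by
    have hbL : (c 0).2 < (c i).2 + σ1 * ((c 0).1 - (c i).1) := sup1 0 (by omega) (by omega)
    by_contra hcon
    push_neg at hcon
    have := mul_le_mul_of_nonneg_left hcon (le_of_lt h01')
    linarith [heqL, hbL, this]
  have hxbL : qL.1 < (c i).1 := by
    have hbU : (c i).2 < (c 0).2 + σ0 * ((c i).1 - (c 0).1) := sup0 i (by omega) (by omega)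
    by_contra hcon
    push_neg at hcon
    have := mul_le_mul_of_nonneg_left hcon (le_of_lt h01')
    linarith [heqL, hbU, this]
  have hxaR : (c i).1 < qR.1 := by
    have hbL : (c i).2 < (c (s+1)).2 + σ3 * ((c i).1 - (c (s+1)).1) := sup3 i (by omega) (by omega)
    by_contra hcon
    push_neg at hcon
    have := mul_le_mul_of_nonneg_left hcon (le_of_lt h23')
    linarith [heqR, hbL, this]
  have hxbR : qR.1 < (c (s+1)).1 := by
    have hbU : (c (s+1)).2 < (c i).2 + σ2 * ((c (s+1)).1 - (c i).1) := sup2 (s+1) (by omega) (by omega)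
    by_contra hcon
    push_neg at hcon
    have := mul_le_mul_of_nonneg_left hcon (le_of_lt h23')
    linarith [heqR, hbU, this]
  have hxLR : qL.1 < qR.1 := lt_trans hxbL hxaR
  -- cross "below" facts
  have hqR_b1 : qR.2 < (c i).2 + σ1 * (qR.1 - (c i).1) := by
    have := mul_lt_mul_of_pos_right h21 (sub_pos.mpr hxaR)
    linarith [hqR2, this]
  have hqR_b0 : qR.2 < (c 0).2 + σ0 * (qR.1 - (c 0).1) := by
    have hP := mul_pos h01' (sub_pos.mpr hxLR)
    linarith [heqL, hqR_b1, hP]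
  have hqL_b2 : qL.2 < (c i).2 + σ2 * (qL.1 - (c i).1) := by
    have := mul_lt_mul_of_pos_right h21 (sub_pos.mpr hxbL)
    linarith [hqL1, this]
  have hqL_b3 : qL.2 < (c (s+1)).2 + σ3 * (qL.1 - (c (s+1)).1) := by
    have hP := mul_pos h23' (sub_pos.mpr hxLR)
    linarith [heqR, hqL_b2, hP]
  -- the ambient set and memberships
  refine ⟨qL, qR, ?_⟩
  obtain ⟨S, hSdef⟩ : ∃ S : Set (ℝ × ℝ), S = {c 0, c (s+1), qL, qR} ∪ (p '' {j | 1 ≤ j ∧ j ≤ s}) := ⟨_, rfl⟩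
  rw [← hSdef]
  have hmem : ∀ r, r ∈ S ↔
      (r = c 0 ∨ r = c (s+1) ∨ r = qL ∨ r = qR ∨ ∃ j, 1 ≤ j ∧ j ≤ s ∧ r = c j) := by
    intro r
    rw [hSdef]
    simp only [Set.mem_union, Set.mem_insert_iff, Set.mem_singleton_iff, Set.mem_image,
      Set.mem_setOf_eq]
    constructor
    · rintro ((h | h | h | h) | ⟨j, ⟨hj1, hj2⟩, hj3⟩)
      · exact Or.inl h
      · exact Or.inr (Or.inl h)
      · exact Or.inr (Or.inr (Or.inl h))
      · exact Or.inr (Or.inr (Or.inr (Or.inl h)))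
      · exact Or.inr (Or.inr (Or.inr (Or.inr ⟨j, hj1, hj2, by rw [← hj3, hci j hj1 hj2]⟩)))
    · rintro (h | h | h | h | ⟨j, hj1, hj2, hj3⟩)
      · exact Or.inl (Or.inl h)
      · exact Or.inl (Or.inr (Or.inl h))
      · exact Or.inl (Or.inr (Or.inr (Or.inl h)))
      · exact Or.inl (Or.inr (Or.inr (Or.inr h)))
      · exact Or.inr ⟨j, ⟨hj1, hj2⟩, by rw [hj3]; exact (hci j hj1 hj2).symm⟩
  have hS0 : c 0 ∈ S := (hmem _).mpr (Or.inl rfl)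
  have hSs : c (s+1) ∈ S := (hmem _).mpr (Or.inr (Or.inl rfl))
  have hSqL : qL ∈ S := (hmem _).mpr (Or.inr (Or.inr (Or.inl rfl)))
  have hSqR : qR ∈ S := (hmem _).mpr (Or.inr (Or.inr (Or.inr (Or.inl rfl))))
  have hSi : c i ∈ S := (hmem _).mpr (Or.inr (Or.inr (Or.inr (Or.inr ⟨i, hi1, hi2, rfl⟩))))
  have hnex : ∀ a b : ℝ × ℝ, a.1 < b.1 → a ≠ b := by
    intro a b h he
    rw [he] at h
    exact lt_irrefl _ h
  intro q
  constructor
  · -- forward: vertex → in 5-set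
    intro hq
    rcases (hmem q).mp hq.1 with h | h | h | h | ⟨j, hj1, hj2, hj3⟩
    · simp only [Set.mem_insert_iff, Set.mem_singleton_iff]; tauto
    · simp only [Set.mem_insert_iff, Set.mem_singleton_iff]; tauto
    · simp only [Set.mem_insert_iff, Set.mem_singleton_iff]; tauto
    · simp only [Set.mem_insert_iff, Set.mem_singleton_iff]; tauto
    · by_cases hji : j = i
      · subst hji
        simp only [Set.mem_insert_iff, Set.mem_singleton_iff]; tauto
      · exfalso
        subst hj3
        rcases Nat.lt_or_ge j i with hlt | hge
        · -- j < i : below the chain pL - qL - p_i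
          have hxj : (c j).1 < (c i).1 := hxlt j i (by omega) (by omega)
          have hx0j : (c 0).1 < (c j).1 := hxlt 0 j (by omega) (by omega)
          have hb0 : (c j).2 < (c 0).2 + σ0 * ((c j).1 - (c 0).1) := sup0 j (by omega) (by omega)
          have hb1 : (c j).2 < (c i).2 + σ1 * ((c j).1 - (c i).1) := sup1 j (by omega) hji
          rcases lt_trichotomy (c j).1 qL.1 with hc' | hc' | hc'
          · refine not_vertex_between S (c j) (c 0) qL hS0 hSqL
              (hnex _ _ hx0j) (Ne.symm (hnex _ _ hc')) hx0j.le hc'.le hxaL ?_ hq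
            rw [hqL0]
            linarith [mul_pos (sub_pos.mpr hxaL)
              (show (0:ℝ) < (c 0).2 + σ0 * ((c j).1 - (c 0).1) - (c j).2 by linarith)]
          · have hy : (c j).2 < qL.2 := by rw [hqL1, ← hc']; exact hb1
            refine not_vertex_under S (c j) qL hSqL ?_ hc'.symm hy.le hq
            intro he
            rw [he] at hy
            exact lt_irrefl _ hy
          · refine not_vertex_between S (c j) qL (c i) hSqL hSi
              (hnex _ _ hc') (Ne.symm (hnex _ _ hxj)) hc'.le hxj.le hxbL ?_ hq
            rw [hqL1]
            linarith [mul_pos (sub_pos.mpr hxbL)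
              (show (0:ℝ) < (c i).2 + σ1 * ((c j).1 - (c i).1) - (c j).2 by linarith)]
        · -- i < j : below the chain p_i - qR - pR
          have hxj : (c i).1 < (c j).1 := hxlt i j (by omega) (by omega)
          have hxjs : (c j).1 < (c (s+1)).1 := hxlt j (s+1) (by omega) (by omega)
          have hb2 : (c j).2 < (c i).2 + σ2 * ((c j).1 - (c i).1) := sup2 j (by omega) hji
          have hb3 : (c j).2 < (c (s+1)).2 + σ3 * ((c j).1 - (c (s+1)).1) :=
            sup3 j (by omega) (by omega)
          rcases lt_trichotomy (c j).1 qR.1 with hc' | hc' | hc'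
          · refine not_vertex_between S (c j) (c i) qR hSi hSqR
              (hnex _ _ hxj) (Ne.symm (hnex _ _ hc')) hxj.le hc'.le hxaR ?_ hq
            rw [hqR2]
            linarith [mul_pos (sub_pos.mpr hxaR)
              (show (0:ℝ) < (c i).2 + σ2 * ((c j).1 - (c i).1) - (c j).2 by linarith)]
          · have hy : (c j).2 < qR.2 := by rw [hqR2, ← hc']; exact hb2
            refine not_vertex_under S (c j) qR hSqR ?_ hc'.symm hy.le hq
            intro he
            rw [he] at hy
            exact lt_irrefl _ hy
          · refine not_vertex_between S (c j) qR (c (s+1)) hSqR hSs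
              (hnex _ _ hc') (Ne.symm (hnex _ _ hxjs)) hc'.le hxjs.le hxbR ?_ hq
            rw [hqR3]
            linarith [mul_pos (sub_pos.mpr hxbR)
              (show (0:ℝ) < (c (s+1)).2 + σ3 * ((c j).1 - (c (s+1)).1) - (c j).2 by linarith)]
  · -- backward: each of the 5 points is a vertex
    intro hq
    simp only [Set.mem_insert_iff, Set.mem_singleton_iff] at hq
    rcases hq with h | h | h | h | h
    · -- q = c 0, slope σ0 + 1
      rw [h]
      refine vertex_of_support S (c 0) hS0 (σ0 + 1) ?_
      intro r hr hne
      rcases (hmem r).mp hr with h | h | h | h | ⟨j, hj1, hj2, hj3⟩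
      · exact absurd h hne
      · rw [h]
        have := sup0 (s+1) (by omega) (by omega)
        have hx := hxlt 0 (s+1) (by omega) (by omega)
        linarith [this, hx]
      · rw [h]
        linarith [hqL0, hxaL]
      · rw [h]
        have hx : (c 0).1 < qR.1 := lt_trans (hxlt 0 i (by omega) (by omega)) hxaR
        linarith [hqR_b0, hx]
      · subst hj3
        have := sup0 j (by omega) (by omega)
        have hx := hxlt 0 j (by omega) (by omega)
        linarith [this, hx]
    · -- q = qL, slope (σ0+σ1)/2
      rw [h]
      refine vertex_of_support S qL hSqL ((σ0 + σ1)/2) ?_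
      have hml : σ1 < (σ0 + σ1)/2 := by linarith
      have hmu : (σ0 + σ1)/2 < σ0 := by linarith
      intro r hr hne
      rcases (hmem r).mp hr with h | h | h | h | ⟨j, hj1, hj2, hj3⟩
      · rw [h]
        linarith [hqL0, mul_pos (show (0:ℝ) < σ0 - (σ0 + σ1)/2 by linarith)
          (sub_pos.mpr hxaL)]
      · rw [h]
        have hb := sup1 (s+1) (by omega) (by omega)
        have hx : qL.1 < (c (s+1)).1 := lt_trans hxbL (hxlt i (s+1) (by omega) (by omega))
        linarith [hb, hqL1, mul_pos (show (0:ℝ) < (σ0 + σ1)/2 - σ1 by linarith)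
          (sub_pos.mpr hx)]
      · exact absurd h hne
      · rw [h]
        linarith [hqR_b1, hqL1, mul_pos (show (0:ℝ) < (σ0 + σ1)/2 - σ1 by linarith)
          (sub_pos.mpr hxLR)]
      · subst hj3
        by_cases hji : j = i
        · subst hji
          linarith [hqL1, mul_pos (show (0:ℝ) < (σ0 + σ1)/2 - σ1 by linarith)
            (sub_pos.mpr hxbL)]
        · rcases le_or_gt (c j).1 qL.1 with hcx | hcx
          · have hb := sup0 j (by omega) (by omega)
            linarith [hb, hqL0, mul_nonneg (show (0:ℝ) ≤ σ0 - (σ0 + σ1)/2 by linarith)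
              (sub_nonneg.mpr hcx)]
          · have hb := sup1 j (by omega) hji
            linarith [hb, hqL1, mul_pos (show (0:ℝ) < (σ0 + σ1)/2 - σ1 by linarith)
              (sub_pos.mpr hcx)]
    · -- q = c i, slope (σ1+σ2)/2
      rw [h]
      refine vertex_of_support S (c i) hSi ((σ1 + σ2)/2) ?_
      intro r hr hne
      rcases (hmem r).mp hr with h | h | h | h | ⟨j, hj1, hj2, hj3⟩
      · rw [h]
        have hb := sup1 0 (by omega) (by omega)
        have hx := hxlt 0 i (by omega) (by omega)
        linarith [hb, mul_pos (show (0:ℝ) < σ1 - (σ1 + σ2)/2 by linarith) (sub_pos.mpr hx)]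
      · rw [h]
        have hb := sup2 (s+1) (by omega) (by omega)
        have hx := hxlt i (s+1) (by omega) (by omega)
        linarith [hb, mul_pos (show (0:ℝ) < (σ1 + σ2)/2 - σ2 by linarith) (sub_pos.mpr hx)]
      · rw [h]
        linarith [hqL1, mul_pos (show (0:ℝ) < σ1 - (σ1 + σ2)/2 by linarith)
          (sub_pos.mpr hxbL)]
      · rw [h]
        linarith [hqR2, mul_pos (show (0:ℝ) < (σ1 + σ2)/2 - σ2 by linarith)
          (sub_pos.mpr hxaR)]
      · subst hj3
        by_cases hji : j = i
        · exact absurd (by rw [hji]) hne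
        · rcases Nat.lt_or_ge j i with hlt | hge
          · have hb := sup1 j (by omega) hji
            have hx := hxlt j i (by omega) (by omega)
            linarith [hb, mul_pos (show (0:ℝ) < σ1 - (σ1 + σ2)/2 by linarith) (sub_pos.mpr hx)]
          · have hb := sup2 j (by omega) hji
            have hx := hxlt i j (by omega) (by omega)
            linarith [hb, mul_pos (show (0:ℝ) < (σ1 + σ2)/2 - σ2 by linarith) (sub_pos.mpr hx)]
    · -- q = qR, slope (σ2+σ3)/2
      rw [h]
      refine vertex_of_support S qR hSqR ((σ2 + σ3)/2) ?_
      intro r hr hne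
      rcases (hmem r).mp hr with h | h | h | h | ⟨j, hj1, hj2, hj3⟩
      · rw [h]
        have hb := sup2 0 (by omega) (by omega)
        have hx : (c 0).1 < qR.1 := lt_trans (hxlt 0 i (by omega) (by omega)) hxaR
        linarith [hb, hqR2, mul_pos (show (0:ℝ) < σ2 - (σ2 + σ3)/2 by linarith)
          (sub_pos.mpr hx)]
      · rw [h]
        linarith [hqR3, mul_pos (show (0:ℝ) < (σ2 + σ3)/2 - σ3 by linarith)
          (sub_pos.mpr hxbR)]
      · rw [h]
        linarith [hqL_b2, hqR2, mul_pos (show (0:ℝ) < σ2 - (σ2 + σ3)/2 by linarith)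
          (sub_pos.mpr hxLR)]
      · exact absurd h hne
      · subst hj3
        by_cases hji : j = i
        · subst hji
          linarith [hqR2, mul_pos (show (0:ℝ) < σ2 - (σ2 + σ3)/2 by linarith)
            (sub_pos.mpr hxaR)]
        · rcases le_or_gt qR.1 (c j).1 with hcx | hcx
          · have hb := sup3 j (by omega) (by omega)
            linarith [hb, hqR3, mul_nonneg (show (0:ℝ) ≤ (σ2 + σ3)/2 - σ3 by linarith)
              (sub_nonneg.mpr hcx)]
          · have hb := sup2 j (by omega) hji
            linarith [hb, hqR2, mul_pos (show (0:ℝ) < σ2 - (σ2 + σ3)/2 by linarith)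
              (sub_pos.mpr hcx)]
    · -- q = c (s+1), slope σ3 - 1
      rw [h]
      refine vertex_of_support S (c (s+1)) hSs (σ3 - 1) ?_
      intro r hr hne
      rcases (hmem r).mp hr with h | h | h | h | ⟨j, hj1, hj2, hj3⟩
      · rw [h]
        have hb := sup3 0 (by omega) (by omega)
        have hx := hxlt 0 (s+1) (by omega) (by omega)
        linarith [hb, hx]
      · exact absurd h hne
      · rw [h]
        have hx : qL.1 < (c (s+1)).1 := lt_trans hxbL (hxlt i (s+1) (by omega) (by omega))
        linarith [hqL_b3, hx]
      · rw [h]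
        linarith [hqR3, hxbR]
      · subst hj3
        have hb := sup3 j (by omega) (by omega)
        have hx := hxlt j (s+1) (by omega) (by omega)
        linarith [hb, hx]
end

section
/- Let Q be a multiset of N real numbers and let σ̂ be any element of Q whose rank lies in the interval [(k−ε)N/(r+1), (k+ε)N/(r+1)] for each k ∈ [1, r] (with σ̂₀ = −∞, σ̂_{r+1} = +∞ and 0 < ε < 1). Then for each k ∈ [1, r+1], the number of elements of Q in the open interval (σ̂_{k−1}, σ̂_k) is at most (1 + 2ε)N/(r+1). -/
/-!
Write `c = N/(r+1)`. The rank window of `σ̂ k` says that fewer than `(k+ε)c` elements lie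
below `σ̂ k` and at least `(k-ε)c` lie at or below it. The elements strictly between
`σ̂ (k-1)` and `σ̂ k` are those below `σ̂ k` but not at or below `σ̂ (k-1)`, so there are
fewer than `(k+ε)c - (k-1-ε)c = (1+2ε)c` of them; at the two ends one of the counts is
replaced by `0` or `N`.
-/

namespace Multiset

variable {α : Type*} [LinearOrder α] (Q : Multiset α)

theorem card_filter_lt_add_card_filter_le (a : α) :
    (Q.filter (a < ·)).card + (Q.filter (· ≤ a)).card = Q.card := by
  conv_rhs => rw [← Q.filter_add_not (a < ·)]
  simp only [card_add, not_lt]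

theorem card_filter_Ioo_add_card_filter_le {a b : α} (hab : a < b) :
    (Q.filter fun z => a < z ∧ z < b).card + (Q.filter (· ≤ a)).card =
      (Q.filter (· < b)).card := by
  conv_rhs => rw [← (Q.filter (· < b)).filter_add_not (a < ·)]
  rw [card_add, filter_filter, filter_filter]
  congr 2
  exact filter_congr fun z _ => ⟨fun h => ⟨not_lt.2 h, h.trans_lt hab⟩, fun h => not_lt.1 h.1⟩

theorem card_filter_Ioo_le_sub {a b : α} {x y : ℝ} (ha : x ≤ (Q.filter (· ≤ a)).card)
    (hb : ((Q.filter (· < b)).card : ℝ) ≤ y) (hxy : x ≤ y) :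
    ((Q.filter fun z => a < z ∧ z < b).card : ℝ) ≤ y - x := by
  rcases lt_or_ge a b with hab | hba
  · have := congrArg (Nat.cast (R := ℝ)) (Q.card_filter_Ioo_add_card_filter_le hab)
    push_cast at this
    linarith
  · rw [filter_eq_nil.2 fun z _ h => (h.1.trans h.2).not_ge hba]
    simpa using hxy

end Multiset

theorem le_and_le_of_exists_nat_between {lo hi : ℝ} {A B : ℕ}
    (h : ∃ m : ℕ, lo ≤ m ∧ (m : ℝ) ≤ hi ∧ A < m ∧ m ≤ B) : (A : ℝ) ≤ hi ∧ lo ≤ B := by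
  obtain ⟨m, hlo, hhi, hA, hB⟩ := h
  exact ⟨le_trans (by exact_mod_cast hA.le) hhi, hlo.trans (by exact_mod_cast hB)⟩

open scoped Classical in
theorem stmt19_general (Q : Multiset ℝ) (N r : ℕ) (hN : Q.card = N) (hr : 1 ≤ r)
    (ε : ℝ) (hε0 : 0 < ε)
    (σ : ℕ → ℝ)
    (hrank : ∀ k, 1 ≤ k → k ≤ r → ∃ m : ℕ,
      ((k : ℝ) - ε) * N / (r + 1) ≤ m ∧ (m : ℝ) ≤ ((k : ℝ) + ε) * N / (r + 1) ∧
      (Q.filter (fun y => y < σ k)).card < m ∧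
      m ≤ (Q.filter (fun y => y ≤ σ k)).card) :
    ∀ k, 1 ≤ k → k ≤ r + 1 →
      ((Q.filter (fun y => (k = 1 ∨ σ (k - 1) < y) ∧ (k = r + 1 ∨ y < σ k))).card : ℝ)
        ≤ (1 + 2 * ε) * N / (r + 1) := by
  intro k hk1 hk2
  have hεc : 0 ≤ ε * (N / (r + 1)) := by positivity
  obtain rfl | rfl | ⟨hk, hkr⟩ : k = 1 ∨ k = r + 1 ∨ (1 < k ∧ k ≤ r) := by omega
  · obtain ⟨hlt, -⟩ := le_and_le_of_exists_nat_between (hrank 1 le_rfl hr)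
    rw [Multiset.filter_congr (q := (· < σ 1)) fun y _ => by simp [show r ≠ 0 by omega]]
    rw [mul_div_assoc] at hlt ⊢
    push_cast at hlt
    linarith
  · obtain ⟨-, hle⟩ := le_and_le_of_exists_nat_between (hrank r hr le_rfl)
    have hsplit := congrArg (Nat.cast (R := ℝ)) (Q.card_filter_lt_add_card_filter_le (σ r))
    have hNc : (N : ℝ) = (r + 1) * (N / (r + 1)) := by field_simp
    rw [Multiset.filter_congr (q := (σ r < ·)) fun y _ => by simp [show r ≠ 0 by omega]]
    rw [mul_div_assoc] at hle ⊢
    push_cast [hN] at hsplit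
    linarith
  · obtain ⟨hlt, -⟩ := le_and_le_of_exists_nat_between (hrank k hk.le hkr)
    obtain ⟨-, hle⟩ := le_and_le_of_exists_nat_between (hrank (k - 1) (by omega) (by omega))
    rw [Multiset.filter_congr (q := fun y => σ (k - 1) < y ∧ y < σ k)
      fun y _ => by simp [show k ≠ 1 by omega, show k ≠ r + 1 by omega]]
    rw [mul_div_assoc] at hlt hle ⊢
    push_cast [Nat.cast_sub hk.le] at hle
    have hxy := mul_le_mul_of_nonneg_right (by linarith : (k : ℝ) - 1 - ε ≤ k + ε)
      (by positivity : (0 : ℝ) ≤ N / (r + 1))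
    convert Q.card_filter_Ioo_le_sub hle hlt hxy using 1
    ring

open scoped Classical in
/-- Approximate quantiles: if each `σ̂ k` has rank within `[(k-ε)N/(r+1), (k+ε)N/(r+1)]`,
then at most `(1+2ε)N/(r+1)` elements lie strictly between consecutive `σ̂`'s
(with `σ̂₀ = -∞`, `σ̂_{r+1} = +∞`). -/
theorem stmt19 (Q : Multiset ℝ) (N r : ℕ) (hN : Q.card = N) (hr : 1 ≤ r)
    (ε : ℝ) (hε0 : 0 < ε) (hε1 : ε < 1)
    (σ : ℕ → ℝ)
    (hmem : ∀ k, 1 ≤ k → k ≤ r → σ k ∈ Q)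
    (hrank : ∀ k, 1 ≤ k → k ≤ r → ∃ m : ℕ,
      ((k : ℝ) - ε) * N / (r + 1) ≤ m ∧ (m : ℝ) ≤ ((k : ℝ) + ε) * N / (r + 1) ∧
      (Q.filter (fun y => y < σ k)).card < m ∧
      m ≤ (Q.filter (fun y => y ≤ σ k)).card)
    (hmono : ∀ k, 1 ≤ k → k < r → σ k ≤ σ (k + 1)) :
    ∀ k, 1 ≤ k → k ≤ r + 1 →
      ((Q.filter (fun y => (k = 1 ∨ σ (k - 1) < y) ∧ (k = r + 1 ∨ y < σ k))).card : ℝ)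
        ≤ (1 + 2 * ε) * N / (r + 1) :=
  stmt19_general Q N r hN hr ε hε0 σ hrank
end
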